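/- For γ > 0 and κ ∈ (0,1), the sum Σ_{i=1}^∞ i^{-1-γ}/(i^{-1-γ} + κ) is Θ(κ^{-1/(1+γ)}): there exist constants c, C > 0 depending only on γ with c κ^{-1/(1+γ)} ≤ Σ_{i=1}^∞ i^{-1-γ}/(i^{-1-γ}+κ) ≤ C κ^{-1/(1+γ)}. -/

import Mathlib

/-!
Write `κ = T ^ (-p)` with `p = 1 + γ` and `T = κ ^ (-1 / p) ≥ 1`. The summand `a / (a + κ)` is at
least `1 / 2` while `a = (i + 1) ^ (-p) ≥ κ`, i.e. for the `⌊T⌋` indices with `i + 1 ≤ T`, which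
gives `T / 4`. From above it is at most `min 1 (a / κ)`: the first `⌈T⌉ ≤ 2T` terms contribute at
most `2T`, and by the integral test the tail `∑_{i ≥ ⌈T⌉} (i + 1) ^ (-p)` is at most
`T ^ (1 - p) / (p - 1)`, which after division by `κ = T ^ (-p)` is `T / (p - 1)`.
-/

open Real Set MeasureTheory

section DivAdd

variable {a : ℕ → ℝ} {κ : ℝ}

theorem summable_div_add (ha : Summable a) (ha0 : ∀ i, 0 ≤ a i) (hκ : 0 < κ) :
    Summable fun i => a i / (a i + κ) :=
  (ha.div_const κ).of_nonneg_of_le (fun i => by have := ha0 i; positivity)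
    fun i => div_le_div_of_nonneg_left (ha0 i) hκ (by linarith [ha0 i])

theorem half_le_tsum_div_add (ha : Summable a) (ha0 : ∀ i, 0 ≤ a i) (hκ : 0 < κ) {n : ℕ}
    (hn : ∀ i < n, κ ≤ a i) : (n : ℝ) / 2 ≤ ∑' i, a i / (a i + κ) :=
  calc (n : ℝ) / 2 = ∑ _i ∈ Finset.range n, (1 / 2 : ℝ) := by
        rw [Finset.sum_const, Finset.card_range, nsmul_eq_mul]; ring
    _ ≤ ∑ i ∈ Finset.range n, a i / (a i + κ) := Finset.sum_le_sum fun i hi => by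
        rw [le_div_iff₀ (by linarith [ha0 i])]
        linarith [hn i (Finset.mem_range.mp hi)]
    _ ≤ _ := (summable_div_add ha ha0 hκ).sum_le_tsum _ fun i _ => by
        have := ha0 i; positivity

theorem tsum_div_add_le (ha : Summable a) (ha0 : ∀ i, 0 ≤ a i) (hκ : 0 < κ) (N : ℕ) :
    ∑' i, a i / (a i + κ) ≤ N + (∑' i, a (i + N)) / κ := by
  rw [← (summable_div_add ha ha0 hκ).sum_add_tsum_nat_add N, ← tsum_div_const]
  gcongr ?_ + ?_
  · calc _ ≤ ∑ _i ∈ Finset.range N, (1 : ℝ) := Finset.sum_le_sum fun i _ =>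
          div_le_one_of_le₀ (by linarith [ha0 i]) (by linarith [ha0 i])
      _ = N := by simp
  · exact ((summable_nat_add_iff N).mpr (summable_div_add ha ha0 hκ)).tsum_le_tsum
      (fun i => div_le_div_of_nonneg_left (ha0 _) hκ (by linarith [ha0 (i + N)]))
      (((summable_nat_add_iff N).mpr ha).div_const κ)

end DivAdd

section RpowNeg

variable {p : ℝ}

theorem summable_nat_add_one_rpow_neg (hp : 1 < p) :
    Summable fun i : ℕ => ((i : ℝ) + 1) ^ (-p) := by
  have := (summable_nat_add_iff 1).mpr (Real.summable_nat_rpow.mpr (neg_lt_neg hp))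
  exact_mod_cast this

theorem tsum_nat_add_rpow_neg_le (hp : 1 < p) {N : ℕ} (hN : 0 < N) :
    ∑' i : ℕ, (((i + N : ℕ) : ℝ) + 1) ^ (-p) ≤ (N : ℝ) ^ (1 - p) / (p - 1) := by
  have hN' : (0 : ℝ) < N := by exact_mod_cast hN
  have key := (antitoneOn_rpow_Ioi_of_exponent_nonpos (by linarith : -p ≤ 0)).mono
    (Ici_subset_Ioi.mpr hN') |>.tsum_comp_add_le_integral N
    (integrableOn_Ioi_rpow_of_lt (by linarith) hN')
    fun t ht => rpow_nonneg (hN'.trans ht).le _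
  rw [integral_Ioi_rpow_of_lt (by linarith) hN'] at key
  convert key using 1
  · push_cast; rfl
  · rw [neg_div, ← div_neg]; ring_nf

variable {T : ℝ}

theorem div_four_le_tsum_rpow_neg_div_add (hp : 1 < p) (hT : 1 ≤ T) :
    T / 4 ≤ ∑' i : ℕ, ((i : ℝ) + 1) ^ (-p) / (((i : ℝ) + 1) ^ (-p) + T ^ (-p)) := by
  have hfloor : T < ⌊T⌋₊ + 1 := Nat.lt_floor_add_one T
  have hfloor_pos : (1 : ℝ) ≤ ⌊T⌋₊ := by exact_mod_cast Nat.one_le_floor_iff T |>.mpr hT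
  refine le_trans (by linarith) (half_le_tsum_div_add (summable_nat_add_one_rpow_neg hp)
    (fun i => by positivity) (by positivity) (n := ⌊T⌋₊) fun i hi => ?_)
  have hiT : (i : ℝ) + 1 ≤ T := by
    have hi' : ((i + 1 : ℕ) : ℝ) ≤ ⌊T⌋₊ := by exact_mod_cast hi
    push_cast at hi'
    linarith [Nat.floor_le (zero_le_one.trans hT)]
  exact rpow_le_rpow_of_nonpos (by positivity) hiT (by linarith)

theorem tsum_rpow_neg_div_add_le (hp : 1 < p) (hT : 1 ≤ T) :
    ∑' i : ℕ, ((i : ℝ) + 1) ^ (-p) / (((i : ℝ) + 1) ^ (-p) + T ^ (-p)) ≤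
      (2 + 1 / (p - 1)) * T := by
  have hT0 : 0 < T := by linarith
  have hceil : (⌈T⌉₊ : ℝ) < T + 1 := Nat.ceil_lt_add_one hT0.le
  have htail : (∑' i, (((i + ⌈T⌉₊ : ℕ) : ℝ) + 1) ^ (-p)) / T ^ (-p) ≤ T / (p - 1) :=
    calc _ ≤ (⌈T⌉₊ : ℝ) ^ (1 - p) / (p - 1) / T ^ (-p) := by
          gcongr
          exact tsum_nat_add_rpow_neg_le hp (Nat.ceil_pos.mpr hT0)
      _ ≤ T ^ (1 - p) / (p - 1) / T ^ (-p) := by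
          have := rpow_le_rpow_of_nonpos hT0 (Nat.le_ceil T) (by linarith : 1 - p ≤ 0)
          gcongr
      _ = T / (p - 1) := by
          rw [div_right_comm, ← rpow_sub hT0, sub_neg_eq_add, sub_add_cancel, rpow_one]
  calc _ ≤ ⌈T⌉₊ + (∑' i, (((i + ⌈T⌉₊ : ℕ) : ℝ) + 1) ^ (-p)) / T ^ (-p) :=
        tsum_div_add_le (summable_nat_add_one_rpow_neg hp) (fun i => by positivity)
          (by positivity) _
    _ ≤ (2 + 1 / (p - 1)) * T := by rw [add_mul, one_div_mul_eq_div]; linarith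

end RpowNeg

/-- For γ > 0 and κ ∈ (0,1),
Σ_{i≥1} i^{-1-γ}/(i^{-1-γ}+κ) = Θ(κ^{-1/(1+γ)}) with constants depending only on γ. -/
theorem stmt14 (γ : ℝ) (hγ : 0 < γ) :
    ∃ c C : ℝ, 0 < c ∧ 0 < C ∧
      ∀ κ : ℝ, κ ∈ Set.Ioo (0:ℝ) 1 →
        c * κ ^ (-1 / (1 + γ)) ≤
            (∑' i : ℕ, ((i : ℝ) + 1) ^ (-(1 + γ)) / (((i : ℝ) + 1) ^ (-(1 + γ)) + κ)) ∧
        (∑' i : ℕ, ((i : ℝ) + 1) ^ (-(1 + γ)) / (((i : ℝ) + 1) ^ (-(1 + γ)) + κ)) ≤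
          C * κ ^ (-1 / (1 + γ)) := by
  refine ⟨1 / 4, 2 + 1 / γ, by norm_num, by positivity, fun κ ⟨hκ0, hκ1⟩ => ?_⟩
  have hp : 1 < 1 + γ := by linarith
  have hT : 1 ≤ κ ^ (-1 / (1 + γ)) := one_le_rpow_of_pos_of_le_one_of_nonpos hκ0 hκ1.le
    (div_nonpos_of_nonpos_of_nonneg (by norm_num) (by linarith))
  have hκ : κ = (κ ^ (-1 / (1 + γ))) ^ (-(1 + γ)) := by
    rw [← rpow_mul hκ0.le, div_mul_eq_mul_div, neg_mul_neg, one_mul, div_self (by linarith),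
      rpow_one]
  constructor
  · rw [one_div_mul_eq_div]
    conv_rhs => rw [hκ]
    exact div_four_le_tsum_rpow_neg_div_add hp hT
  · conv_lhs => rw [hκ]
    simpa only [add_sub_cancel_left] using tsum_rpow_neg_div_add_le hp hT
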